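/- arXiv:1808.01470 — 5 statements merged into one kernel-verified Lean document; each statement's English description precedes it below -/
import Mathlib

section
/- (Lemma 3.1): For every p with 0 < p < ∞ there exists a constant C_p > 0, depending only on p and independent of d and m, such that for all d ∈ ℕ (d ≥ 1) and all real m ≥ 1: if m ≤ d then ln(#{h ∈ ℤ^d : Σ_{k=1}^d |h_k|^p ≤ m}) ≤ C_p · m · ln(2d/m), and if m ≥ d then ln(#{h ∈ ℤ^d : Σ_{k=1}^d |h_k|^p ≤ m}) ≤ C_p · d · ln(2m/d). -/
/-!
Rankin's trick: for every `t ≥ 0`, the number of `h ∈ ℤ^d` with `∑ |h_k|^p ≤ m` is at most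
`e^{tm} ∑_h e^{-t ∑ |h_k|^p} = e^{tm} θ(t)^d`, where `θ(t) = ∑_{j ∈ ℤ} e^{-t|j|^p}`
(truncated to `|j| ≤ m^{1/p}`, which keeps every sum finite). Comparing `θ` with
`∫_0^∞ e^{-t x^p} dx = t^{-1/p} Γ(1/p + 1)` gives `θ(t) ≤ 1 + 2 Γ(1/p + 1) t^{-1/p}`,
and, since `e^{-t n^p} ≤ e^{1-t} e^{-n^p}` for `t, n ≥ 1`, also
`θ(t) ≤ 1 + 2 e^{1-t} Γ(1/p + 1)`.
The choice `t = 1 + log (2d/m)` settles the case `m ≤ d`, and `t = d/(2m)` the case `d ≤ m`.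
-/

open Finset Real

theorem Function.Even.sum_Icc_neg_natCast {M : Type*} [AddCommMonoid M] {f : ℤ → M}
    (hf : f.Even) (R : ℕ) :
    ∑ j ∈ Icc (-(R : ℤ)) R, f j = f 0 + 2 • ∑ n ∈ range R, f ↑(n + 1) := by
  induction R with
  | zero => simp
  | succ R ih =>
    have hsplit : Icc (-((R + 1 : ℕ) : ℤ)) (R + 1 : ℕ) =
        insert (-((R + 1 : ℕ) : ℤ)) (insert ((R + 1 : ℕ) : ℤ) (Icc (-(R : ℤ)) R)) := by
      ext x; simp only [mem_Icc, mem_insert]; omega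
    rw [hsplit, sum_insert (by simp only [mem_insert, mem_Icc]; omega),
      sum_insert (by simp only [mem_Icc]; omega), ih, hf, sum_range_succ, smul_add, two_smul]
    abel

namespace LpLatticePoints

def lpBallPoints (d : ℕ) (p m : ℝ) : Set (Fin d → ℤ) := {h | ∑ k, (|h k| : ℝ) ^ p ≤ m}

variable {p t : ℝ}

theorem sum_range_exp_neg_mul_rpow_le_rpow_mul_Gamma (hp : 0 < p) (ht : 0 < t) (R : ℕ) :
    ∑ n ∈ range R, exp (-t * ((n : ℝ) + 1) ^ p) ≤ t ^ (-1 / p) * Gamma (1 / p + 1) := by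
  have anti : AntitoneOn (fun x : ℝ => exp (-t * x ^ p)) (Set.Icc 0 R) := by
    intro x hx y _ hxy
    simp only [neg_mul, exp_le_exp, neg_le_neg_iff]
    gcongr
    exact hx.1
  have integrable : MeasureTheory.IntegrableOn (fun x : ℝ => exp (-t * x ^ p)) (Set.Ioi 0) := by
    simpa using integrableOn_rpow_mul_exp_neg_mul_rpow neg_one_lt_zero hp ht
  rw [← integral_exp_neg_mul_rpow hp ht]
  exact_mod_cast anti.sum_range_le_integral integrable fun x _ => (exp_pos _).le

theorem sum_range_exp_neg_mul_rpow_le_exp_mul_Gamma (hp : 0 < p) (ht : 1 ≤ t) (R : ℕ) :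
    ∑ n ∈ range R, exp (-t * ((n : ℝ) + 1) ^ p) ≤ exp (1 - t) * Gamma (1 / p + 1) := by
  calc ∑ n ∈ range R, exp (-t * ((n : ℝ) + 1) ^ p)
      ≤ ∑ n ∈ range R, exp (1 - t) * exp (-1 * ((n : ℝ) + 1) ^ p) := by
        gcongr with n
        rw [← exp_add, exp_le_exp]
        have : 1 ≤ ((n : ℝ) + 1) ^ p := one_le_rpow (le_add_of_nonneg_left n.cast_nonneg) hp.le
        nlinarith
    _ ≤ exp (1 - t) * Gamma (1 / p + 1) := by
        rw [← mul_sum]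
        gcongr
        simpa using sum_range_exp_neg_mul_rpow_le_rpow_mul_Gamma hp one_pos R

variable {d : ℕ} {m : ℝ}

theorem lpBallPoints_subset_piFinset (hp : 0 < p) {R : ℕ} (hR : m ^ p⁻¹ ≤ R) :
    lpBallPoints d p m ⊆ ↑(Fintype.piFinset fun _ : Fin d => Icc (-(R : ℤ)) R) := by
  intro h hh
  rw [mem_coe, Fintype.mem_piFinset]
  intro k
  have hk : (|h k| : ℝ) ^ p ≤ m := (single_le_sum (f := fun i => (|h i| : ℝ) ^ p)
    (fun i _ => by positivity) (mem_univ k)).trans hh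
  have hm : 0 ≤ m := (by positivity : (0 : ℝ) ≤ _).trans hk
  have : (|h k| : ℝ) ≤ R := ((le_rpow_inv_iff_of_pos (abs_nonneg _) hm hp).mpr hk).trans hR
  rw [mem_Icc, ← abs_le]
  exact_mod_cast this

theorem ncard_lpBallPoints_le (hp : 0 < p) (ht : 0 ≤ t) {R : ℕ} (hR : m ^ p⁻¹ ≤ R) :
    ((lpBallPoints d p m).ncard : ℝ) ≤
      exp (t * m) * (1 + 2 * ∑ n ∈ range R, exp (-t * ((n : ℝ) + 1) ^ p)) ^ d := by
  have hS : lpBallPoints d p m = ↑((Fintype.piFinset fun _ : Fin d => Icc (-(R : ℤ)) R).filter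
      fun h => ∑ k, (|h k| : ℝ) ^ p ≤ m) := by
    ext h
    rw [coe_filter]
    exact ⟨fun hh => ⟨lpBallPoints_subset_piFinset hp hR hh, hh⟩, And.right⟩
  rw [hS, Set.ncard_coe_finset, card_filter]
  push_cast
  calc _ ≤ ∑ h ∈ Fintype.piFinset fun _ : Fin d => Icc (-(R : ℤ)) R,
        exp (t * m) * ∏ k, exp (-t * (|h k| : ℝ) ^ p) := by
        gcongr with h
        split_ifs with hh
        · rw [← exp_sum, ← exp_add, one_le_exp_iff, ← mul_sum]
          nlinarith
        · positivity
    _ = exp (t * m) * (1 + 2 * ∑ n ∈ range R, exp (-t * ((n : ℝ) + 1) ^ p)) ^ d := by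
        rw [← mul_sum, ← prod_univ_sum (fun _ => Icc (-(R : ℤ)) R)
          (fun _ j => exp (-t * (|j| : ℝ) ^ p)), prod_const, card_univ, Fintype.card_fin,
          Function.Even.sum_Icc_neg_natCast (f := fun j : ℤ => exp (-t * (|j| : ℝ) ^ p))
            (fun j => by simp)]
        simp only [Int.cast_natCast, Nat.abs_cast, Int.cast_zero, abs_zero, zero_rpow hp.ne',
          mul_zero, exp_zero, nsmul_eq_mul]
        push_cast
        ring

theorem log_ncard_lpBallPoints_le (hp : 0 < p) (ht : 0 ≤ t) (hm : 0 ≤ m) {B : ℝ}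
    (hB : ∀ R : ℕ, ∑ n ∈ range R, exp (-t * ((n : ℝ) + 1) ^ p) ≤ B) :
    log (lpBallPoints d p m).ncard ≤ t * m + d * log (1 + 2 * B) := by
  set R := ⌈m ^ p⁻¹⌉₊
  have hR : m ^ p⁻¹ ≤ R := Nat.le_ceil _
  have hpos : 0 < (lpBallPoints d p m).ncard := by
    refine (Set.ncard_pos ((finite_toSet _).subset (lpBallPoints_subset_piFinset hp hR))).mpr
      ⟨0, ?_⟩
    simpa [lpBallPoints, zero_rpow hp.ne'] using hm
  calc log (lpBallPoints d p m).ncard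
      ≤ log (exp (t * m) * (1 + 2 * ∑ n ∈ range R, exp (-t * ((n : ℝ) + 1) ^ p)) ^ d) :=
        log_le_log (by exact_mod_cast hpos) (ncard_lpBallPoints_le hp ht hR)
    _ = t * m + d * log (1 + 2 * ∑ n ∈ range R, exp (-t * ((n : ℝ) + 1) ^ p)) := by
        rw [log_mul (exp_ne_zero _) (by positivity), log_exp, log_pow]
    _ ≤ t * m + d * log (1 + 2 * B) := by
        gcongr
        exact hB R

theorem le_div_log_two_mul {a L : ℝ} (ha : 0 ≤ a) (hL : log 2 ≤ L) : a ≤ a / log 2 * L := by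
  rw [div_mul_eq_mul_div, le_div_iff₀ (log_pos one_lt_two)]
  exact mul_le_mul_of_nonneg_left hL ha

theorem exists_log_ncard_lpBallPoints_le_of_le (hp : 0 < p) :
    ∃ C > 0, ∀ (d : ℕ) (m : ℝ), 0 < m → m ≤ d →
      log (lpBallPoints d p m).ncard ≤ C * m * log (2 * d / m) := by
  set Γ := Gamma (1 / p + 1)
  have hΓ : 0 < Γ := Gamma_pos_of_pos (by positivity)
  refine ⟨1 + (1 + Γ) / log 2, by positivity, fun d m hm hmd => ?_⟩
  set L := log (2 * d / m)
  have hd : 0 < (d : ℝ) := hm.trans_le hmd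
  have hL : log 2 ≤ L := log_le_log two_pos (by rw [le_div_iff₀ hm]; linarith)
  have hL0 : 0 ≤ L := (log_pos one_lt_two).le.trans hL
  have key : log (lpBallPoints d p m).ncard ≤
      (1 + L) * m + d * log (1 + 2 * (exp (1 - (1 + L)) * Γ)) :=
    log_ncard_lpBallPoints_le hp (by positivity) hm.le
      (sum_range_exp_neg_mul_rpow_le_exp_mul_Gamma hp (by linarith))
  have hexp : exp (1 - (1 + L)) = m / (2 * d) := by
    rw [sub_add_cancel_left, exp_neg, exp_log (by positivity), inv_div]
  have hlog : d * log (1 + 2 * (m / (2 * d) * Γ)) ≤ m * Γ :=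
    calc d * log (1 + 2 * (m / (2 * d) * Γ)) ≤ d * (2 * (m / (2 * d) * Γ)) := by
          gcongr
          linarith [log_le_sub_one_of_pos (by positivity : 0 < 1 + 2 * (m / (2 * d) * Γ))]
      _ = m * Γ := by field_simp
  rw [hexp] at key
  calc log (lpBallPoints d p m).ncard ≤ m * (L + (1 + Γ)) := by linarith
    _ ≤ m * (L + (1 + Γ) / log 2 * L) := by
      gcongr
      exact le_div_log_two_mul (by positivity) hL
    _ = (1 + (1 + Γ) / log 2) * m * L := by ring

theorem exists_log_ncard_lpBallPoints_le_of_ge (hp : 0 < p) :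
    ∃ C > 0, ∀ (d : ℕ) (m : ℝ), 0 < d → (d : ℝ) ≤ m →
      log (lpBallPoints d p m).ncard ≤ C * d * log (2 * m / d) := by
  set Γ := Gamma (1 / p + 1)
  have hΓ : 0 < Γ := Gamma_pos_of_pos (by positivity)
  have hlogΓ : 0 < log (1 + 2 * Γ) := log_pos (by linarith)
  refine ⟨(1 / 2 + log (1 + 2 * Γ)) / log 2 + 1 / p, by positivity, fun d m hd hdm => ?_⟩
  set L := log (2 * m / d)
  have hd : 0 < (d : ℝ) := by exact_mod_cast hd
  have hm : 0 < m := hd.trans_le hdm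
  have hL : log 2 ≤ L := log_le_log two_pos (by rw [le_div_iff₀ hd]; linarith)
  set t := d / (2 * m) with ht_def
  have ht : 0 < t := by positivity
  have hs : 1 ≤ t ^ (-1 / p) :=
    one_le_rpow_of_pos_of_le_one_of_nonpos ht (by rw [div_le_one (by positivity)]; linarith)
      (by rw [neg_div]; exact neg_nonpos.mpr (by positivity))
  have hlog : log (1 + 2 * (t ^ (-1 / p) * Γ)) ≤ log (1 + 2 * Γ) + L / p :=
    calc log (1 + 2 * (t ^ (-1 / p) * Γ)) ≤ log ((1 + 2 * Γ) * t ^ (-1 / p)) :=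
          log_le_log (by positivity) (by nlinarith)
      _ = log (1 + 2 * Γ) + L / p := by
          rw [log_mul (by positivity) (by positivity), log_rpow ht,
            show t = (2 * m / d)⁻¹ by rw [inv_div], log_inv]
          ring
  have key : log (lpBallPoints d p m).ncard ≤ t * m + d * log (1 + 2 * (t ^ (-1 / p) * Γ)) :=
    log_ncard_lpBallPoints_le hp ht.le hm.le (sum_range_exp_neg_mul_rpow_le_rpow_mul_Gamma hp ht)
  have htm : t * m = d / 2 := by rw [ht_def]; field_simp
  calc log (lpBallPoints d p m).ncard ≤ d / 2 + d * (log (1 + 2 * Γ) + L / p) :=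
        key.trans (by rw [htm]; gcongr)
    _ = d * ((1 / 2 + log (1 + 2 * Γ)) + L / p) := by ring
    _ ≤ d * ((1 / 2 + log (1 + 2 * Γ)) / log 2 * L + L / p) := by
        gcongr
        exact le_div_log_two_mul (by positivity) hL
    _ = ((1 / 2 + log (1 + 2 * Γ)) / log 2 + 1 / p) * d * L := by ring

end LpLatticePoints

/-- Lemma 3.1: for every `0 < p < ∞` there is a constant `C_p > 0`, independent of
`d` and `m`, such that for all `d ≥ 1` and real `m ≥ 1`,
`ln #{h ∈ ℤ^d : ∑ |h_k|^p ≤ m} ≤ C_p·m·ln(2d/m)` when `m ≤ d`, and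
`ln #{h ∈ ℤ^d : ∑ |h_k|^p ≤ m} ≤ C_p·d·ln(2m/d)` when `m ≥ d`. -/
theorem lemma3_1 (p : ℝ) (hp : 0 < p) :
    ∃ C > 0, ∀ (d : ℕ), 1 ≤ d → ∀ (m : ℝ), 1 ≤ m →
      (m ≤ d →
        Real.log (Set.ncard {h : Fin d → ℤ | ∑ k, (|h k| : ℝ) ^ p ≤ m}) ≤
          C * m * Real.log (2 * d / m)) ∧
      ((d : ℝ) ≤ m →
        Real.log (Set.ncard {h : Fin d → ℤ | ∑ k, (|h k| : ℝ) ^ p ≤ m}) ≤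
          C * d * Real.log (2 * m / d)) := by
  obtain ⟨C₁, hC₁, h₁⟩ := LpLatticePoints.exists_log_ncard_lpBallPoints_le_of_le hp
  obtain ⟨C₂, -, h₂⟩ := LpLatticePoints.exists_log_ncard_lpBallPoints_le_of_ge hp
  refine ⟨max C₁ C₂, lt_max_of_lt_left hC₁, fun d hd m hm => ⟨fun hmd => ?_, fun hdm => ?_⟩⟩
  · have hL : 0 ≤ log (2 * d / m) := log_nonneg (by rw [le_div_iff₀ (by linarith)]; linarith)
    calc _ ≤ C₁ * m * log (2 * d / m) := h₁ d m (by linarith) hmd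
      _ ≤ _ := by gcongr; exact le_max_left _ _
  · have hL : 0 ≤ log (2 * m / d) :=
      log_nonneg (by rw [le_div_iff₀ (by exact_mod_cast hd)]; linarith)
    calc _ ≤ C₂ * d * log (2 * m / d) := h₂ d m hd hdm
      _ ≤ _ := by gcongr; exact le_max_right _ _
end

section
/- (Corollary 3.2): For every p with 0 < p < ∞ there exists a constant C_p > 0, depending only on p and independent of d and m, such that for all d ∈ ℕ (d ≥ 1) and all real m ≥ 1: ln(#{h ∈ ℤ^d : Σ_{k=1}^d |h_k|^p ≤ m}) ≤ C_p · d · (ln(2d) + ln(2m)). -/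
/-!
Every coordinate of a point of the integer `ℓ^p`-ball of radius `m` satisfies
`|h k| ≤ m^(1/p)`, so the ball lies in the cube `[-N, N]^d` with `N = ⌈m^(1/p)⌉`, which has
`(2N + 1)^d ≤ (8 m^(1/p))^d` points. Taking logarithms gives
`d (3 ln 2 + ln m / p) ≤ (3 + 1/p) d (ln(2d) + ln(2m))`.
-/

open Finset

def intLpBall (ι : Type*) [Fintype ι] (p m : ℝ) : Set (ι → ℤ) :=
  {h | ∑ k, (|h k| : ℝ) ^ p ≤ m}

theorem abs_le_rpow_inv_of_sum_rpow_le {ι : Type*} [Fintype ι] {p m : ℝ} (hp : 0 < p)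
    {x : ι → ℝ} (hx : ∑ k, |x k| ^ p ≤ m) (k : ι) : |x k| ≤ m ^ p⁻¹ := by
  have hm : 0 ≤ m := (sum_nonneg fun i _ => by positivity).trans hx
  rw [Real.le_rpow_inv_iff_of_pos (abs_nonneg _) hm hp]
  exact (single_le_sum (f := fun i => |x i| ^ p) (fun i _ => by positivity) (mem_univ k)).trans hx

theorem intLpBall_subset_piFinset_Icc {ι : Type*} [Fintype ι] [DecidableEq ι] {p : ℝ}
    (hp : 0 < p) (m : ℝ) :
    intLpBall ι p m ⊆
      Fintype.piFinset fun _ : ι => Icc (-(⌈m ^ p⁻¹⌉₊ : ℤ)) ⌈m ^ p⁻¹⌉₊ := by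
  intro h hh
  simp only [Fintype.coe_piFinset, Set.mem_pi, Set.mem_univ, coe_Icc, Set.mem_Icc, forall_const]
  intro k
  have hk : ((|h k| : ℤ) : ℝ) ≤ ⌈m ^ p⁻¹⌉₊ := by
    push_cast
    have hx : ∑ k, |(h k : ℝ)| ^ p ≤ m := by simpa [intLpBall] using hh
    exact (abs_le_rpow_inv_of_sum_rpow_le hp hx k).trans (Nat.le_ceil _)
  exact abs_le.mp (by exact_mod_cast hk)

theorem intLpBall_finite {ι : Type*} [Fintype ι] {p : ℝ} (hp : 0 < p) (m : ℝ) :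
    (intLpBall ι p m).Finite := by
  classical
  exact (Finset.finite_toSet _).subset (intLpBall_subset_piFinset_Icc hp m)

theorem ncard_intLpBall_le {ι : Type*} [Fintype ι] {p : ℝ} (hp : 0 < p) (m : ℝ) :
    (intLpBall ι p m).ncard ≤ (2 * ⌈m ^ p⁻¹⌉₊ + 1) ^ Fintype.card ι := by
  classical
  set N := ⌈m ^ p⁻¹⌉₊
  calc (intLpBall ι p m).ncard
      ≤ #(Fintype.piFinset fun _ : ι => Icc (-(N : ℤ)) N) := by
        rw [← Set.ncard_coe_finset]
        exact Set.ncard_le_ncard (intLpBall_subset_piFinset_Icc hp m) (Finset.finite_toSet _)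
    _ = (2 * N + 1) ^ Fintype.card ι := by
        rw [Fintype.card_piFinset, prod_const, Int.card_Icc, card_univ]
        congr 1
        omega

theorem ncard_intLpBall_pos {ι : Type*} [Fintype ι] {p m : ℝ} (hp : 0 < p) (hm : 0 ≤ m) :
    0 < (intLpBall ι p m).ncard := by
  refine (Set.ncard_pos (intLpBall_finite hp m)).mpr ⟨0, ?_⟩
  simpa [intLpBall, Real.zero_rpow hp.ne'] using hm

theorem two_mul_natCeil_add_one_le {x : ℝ} (hx : 1 ≤ x) :
    (2 * ⌈x⌉₊ + 1 : ℝ) ≤ 2 ^ 3 * x := by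
  linarith [Nat.ceil_lt_add_one (zero_le_one.trans hx)]

theorem log_ncard_intLpBall_le {ι : Type*} [Fintype ι] {p m : ℝ} (hp : 0 < p) (hm : 1 ≤ m) :
    Real.log (intLpBall ι p m).ncard ≤
      Fintype.card ι * (3 * Real.log 2 + p⁻¹ * Real.log m) := by
  have hm0 : 0 < m := zero_lt_one.trans_le hm
  have hcube : ((intLpBall ι p m).ncard : ℝ) ≤ (2 ^ 3 * m ^ p⁻¹) ^ Fintype.card ι :=
    calc ((intLpBall ι p m).ncard : ℝ)
        ≤ ((2 * ⌈m ^ p⁻¹⌉₊ + 1 : ℕ) : ℝ) ^ Fintype.card ι := by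
          exact_mod_cast ncard_intLpBall_le hp m
      _ ≤ (2 ^ 3 * m ^ p⁻¹) ^ Fintype.card ι := by
          push_cast
          gcongr
          exact two_mul_natCeil_add_one_le (Real.one_le_rpow hm (by positivity))
  calc Real.log (intLpBall ι p m).ncard
      ≤ Real.log ((2 ^ 3 * m ^ p⁻¹) ^ Fintype.card ι) :=
        Real.log_le_log (by exact_mod_cast ncard_intLpBall_pos hp hm0.le) hcube
    _ = Fintype.card ι * (3 * Real.log 2 + p⁻¹ * Real.log m) := by
        rw [Real.log_pow, Real.log_mul (by positivity) (by positivity), Real.log_pow,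
          Real.log_rpow hm0]
        push_cast
        ring

/-- Corollary 3.2: for every `0 < p < ∞` there is a constant `C_p > 0`, independent
of `d` and `m`, such that for all `d ≥ 1` and real `m ≥ 1`,
`ln #{h ∈ ℤ^d : ∑ |h_k|^p ≤ m} ≤ C_p · d · (ln(2d) + ln(2m))`. -/
theorem cor3_2 (p : ℝ) (hp : 0 < p) :
    ∃ C > 0, ∀ (d : ℕ), 1 ≤ d → ∀ (m : ℝ), 1 ≤ m →
      Real.log (Set.ncard {h : Fin d → ℤ | ∑ k, (|h k| : ℝ) ^ p ≤ m}) ≤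
        C * d * (Real.log (2 * d) + Real.log (2 * m)) := by
  refine ⟨3 + p⁻¹, by positivity, fun d hd m hm => ?_⟩
  have hd' : (1 : ℝ) ≤ d := by exact_mod_cast hd
  have hlog2 : Real.log 2 ≤ Real.log (2 * d) := Real.log_le_log two_pos (by linarith)
  have hlogm : Real.log m ≤ Real.log (2 * m) := Real.log_le_log (by linarith) (by linarith)
  have h2 : 0 ≤ Real.log 2 := Real.log_nonneg one_le_two
  have hm0 : 0 ≤ Real.log m := Real.log_nonneg hm
  have hp' : 0 ≤ p⁻¹ := inv_nonneg.mpr hp.le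
  calc Real.log (Set.ncard {h : Fin d → ℤ | ∑ k, (|h k| : ℝ) ^ p ≤ m})
      ≤ d * (3 * Real.log 2 + p⁻¹ * Real.log m) := by
        have h := log_ncard_intLpBall_le (ι := Fin d) hp hm
        rw [Fintype.card_fin] at h
        exact h
    _ ≤ (3 + p⁻¹) * d * (Real.log (2 * d) + Real.log (2 * m)) := by
        rw [mul_comm (3 + p⁻¹), mul_assoc]
        gcongr
        nlinarith
end

section
/- (Inequality (2.3)): Fix ω ∈ (0,1), a nondecreasing sequence of positive reals a = (a_k)_{k≥1} and positive reals b = (b_k)_{k≥1} with b_* := inf_k b_k > 0. For τ₀ > 0 set M_{τ₀} := 2·Σ_{j=1}^∞ ω^{τ₀ a_1 (j^{b_*}−1)} (a finite quantity). Then for every τ with τ > τ₀ and every d ∈ ℕ: ln 2 · Σ_{k=1}^d ω^{τ a_k} ≤ ln( Σ_{h∈ℤ^d} ω_h^τ ) ≤ M_{τ₀} · Σ_{k=1}^d ω^{τ a_k}, where ω_h := ω^{Σ_{k=1}^d a_k|h_k|^{b_k}} and the family (ω_h^τ)_{h∈ℤ^d} is summable. -/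
noncomputable section

/-- The exponent sum `∑_{k=1}^d a_k |h_k|^{b_k}` (0-indexed sequences). -/
def korSum (a b : ℕ → ℝ) (d : ℕ) (h : Fin d → ℤ) : ℝ :=
  ∑ k : Fin d, a k.1 * (|h k| : ℝ) ^ (b k.1)

/-- The eigenvalue `ω_h = ω^{∑_{k=1}^d a_k |h_k|^{b_k}}`. -/
def wfun (ω : ℝ) (a b : ℕ → ℝ) (d : ℕ) (h : Fin d → ℤ) : ℝ :=
  ω ^ (korSum a b d h)

/-! The weight `ω_h^τ` factorises over the coordinates, so the lattice sum is the product of the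
one-dimensional sums `θ_k = ∑_{n ∈ ℤ} q_k ^ |n|^{b_k}` with `q_k = ω^{τ a_k}`, and its logarithm is
`∑_k log θ_k`. The terms `n = 0, 1` give `1 + q_k ≤ θ_k`, and since `q_k ≤ q₀ = ω^{τ₀ a_1}` and
`b_k ≥ b_*`, each term `q_k ^ j^{b_k}` with `j ≥ 1` is at most `q_k · q₀ ^ (j^{b_*} - 1)`, so
`θ_k ≤ 1 + M_{τ₀} q_k`. Concavity of `log` gives `log 2 · x ≤ log (1 + x)` on `[0, 1]`, and
`log y ≤ y - 1` gives the upper bound. -/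

open Real Filter

theorem hasSum_fin_pi_prod {β : Type*} {n : ℕ} {f : Fin n → β → ℝ}
    (hf_nonneg : ∀ i b, 0 ≤ f i b) (hf : ∀ i, Summable (f i)) :
    HasSum (fun x : Fin n → β => ∏ i, f i (x i)) (∏ i, ∑' b, f i b) := by
  induction n with
  | zero => simp
  | succ n ih =>
    have htail := ih (fun i b => hf_nonneg i.succ b) (fun i => hf i.succ)
    have hhead_nonneg : 0 ≤ f 0 := hf_nonneg 0
    have htail_nonneg : 0 ≤ fun x : Fin n → β => ∏ i, f i.succ (x i) :=
      fun x => Finset.prod_nonneg fun i _ => hf_nonneg i.succ (x i)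
    have hsummable := (hf 0).mul_of_nonneg htail.summable hhead_nonneg htail_nonneg
    rw [Fin.prod_univ_succ, ← (Fin.consEquiv fun _ => β).hasSum_iff]
    simpa [Function.comp_def, Fin.prod_univ_succ, Fin.consEquiv] using
      (hf 0).hasSum.mul htail hsummable

theorem log_two_mul_le_log_one_add {x : ℝ} (hx0 : 0 ≤ x) (hx1 : x ≤ 1) :
    log 2 * x ≤ log (1 + x) := by
  have := strictConcaveOn_log_Ioi.concaveOn.2 (Set.mem_Ioi.mpr one_pos)
    (Set.mem_Ioi.mpr two_pos) (sub_nonneg.mpr hx1) hx0 (sub_add_cancel 1 x)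
  simp only [smul_eq_mul, log_one, mul_zero, zero_add] at this
  rwa [mul_comm, show (1 - x) * 1 + x * 2 = 1 + x by ring] at this

section OneDimensional

variable {q β : ℝ}

theorem summable_rpow_natCast_rpow (hq0 : 0 < q) (hq1 : q < 1) (hβ : 0 < β) :
    Summable fun n : ℕ => q ^ ((n : ℝ) ^ β) := by
  have hlog : 0 < -log q := neg_pos.mpr (log_neg hq0 hq1)
  have hexp : (fun x : ℝ => exp (-(-log q) * x ^ β)) =o[atTop] fun x => x ^ (-2 : ℝ) := by
    refine ((isLittleO_exp_neg_mul_rpow_atTop hlog (-2 / β)).comp_tendsto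
      (tendsto_rpow_atTop hβ)).congr' .rfl ?_
    filter_upwards [eventually_ge_atTop 0] with x hx
    rw [Function.comp_apply, ← rpow_mul hx, mul_div_cancel₀ _ hβ.ne']
  refine (summable_of_isBigO_nat (summable_nat_rpow.mpr (by norm_num))
    (hexp.comp_tendsto tendsto_natCast_atTop_atTop).isBigO).congr fun n => ?_
  simp [rpow_def_of_pos hq0]

theorem summable_rpow_natCast_add_one_rpow (hq0 : 0 < q) (hq1 : q < 1) (hβ : 0 < β) :
    Summable fun n : ℕ => q ^ (((n : ℝ) + 1) ^ β) := by
  simpa using (summable_nat_add_iff 1).mpr (summable_rpow_natCast_rpow hq0 hq1 hβ)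

theorem summable_rpow_abs_intCast_rpow (hq0 : 0 < q) (hq1 : q < 1) (hβ : 0 < β) :
    Summable fun n : ℤ => q ^ (|(n : ℝ)| ^ β) := by
  refine .of_nat_of_neg ?_ ?_ <;>
    simpa using summable_rpow_natCast_rpow hq0 hq1 hβ

theorem tsum_rpow_abs_intCast_rpow_eq (hq0 : 0 < q) (hq1 : q < 1) (hβ : 0 < β) :
    ∑' n : ℤ, q ^ (|(n : ℝ)| ^ β) = 1 + 2 * ∑' j : ℕ, q ^ (((j : ℝ) + 1) ^ β) := by
  rw [tsum_int_eq_zero_add_two_mul_tsum_pnat (fun n => by simp)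
    (summable_rpow_abs_intCast_rpow hq0 hq1 hβ),
    tsum_pnat_eq_tsum_succ (f := fun n : ℕ => q ^ (|((n : ℤ) : ℝ)| ^ β))]
  simp only [Int.cast_zero, abs_zero, zero_rpow hβ.ne', rpow_zero, nsmul_eq_mul, Nat.cast_ofNat]
  congr 2
  exact tsum_congr fun j => by push_cast; rw [abs_of_nonneg (by positivity)]

theorem one_add_le_tsum_rpow_abs_intCast_rpow (hq0 : 0 < q) (hq1 : q < 1) (hβ : 0 < β) :
    1 + q ≤ ∑' n : ℤ, q ^ (|(n : ℝ)| ^ β) := by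
  have h01 : ∑ n ∈ ({0, 1} : Finset ℤ), q ^ (|(n : ℝ)| ^ β) = 1 + q := by
    simp [zero_rpow hβ.ne']
  exact h01 ▸ (summable_rpow_abs_intCast_rpow hq0 hq1 hβ).sum_le_tsum _
    fun n _ => (rpow_pos_of_pos hq0 _).le

theorem tsum_rpow_abs_intCast_rpow_pos (hq0 : 0 < q) (hq1 : q < 1) (hβ : 0 < β) :
    0 < ∑' n : ℤ, q ^ (|(n : ℝ)| ^ β) := by
  linarith [one_add_le_tsum_rpow_abs_intCast_rpow hq0 hq1 hβ]

theorem tsum_rpow_abs_intCast_rpow_le {q₀ B : ℝ} (hq0 : 0 < q) (hqq₀ : q ≤ q₀)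
    (hq₀1 : q₀ < 1) (hB : 0 < B) (hBβ : B ≤ β) :
    ∑' n : ℤ, q ^ (|(n : ℝ)| ^ β) ≤ 1 + 2 * q * ∑' j : ℕ, q₀ ^ (((j : ℝ) + 1) ^ B - 1) := by
  have hq₀0 := hq0.trans_le hqq₀
  have hq1 := hqq₀.trans_lt hq₀1
  have hβ := hB.trans_le hBβ
  have hsummable : Summable fun j : ℕ => q₀ ^ (((j : ℝ) + 1) ^ B - 1) :=
    ((summable_rpow_natCast_add_one_rpow hq₀0 hq₀1 hB).div_const q₀).congr fun j => by
      rw [rpow_sub hq₀0, rpow_one]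
  have hterm (j : ℕ) : q ^ (((j : ℝ) + 1) ^ β) ≤ q * q₀ ^ (((j : ℝ) + 1) ^ B - 1) := by
    have hj : 1 ≤ (j : ℝ) + 1 := le_add_of_nonneg_left j.cast_nonneg
    calc q ^ (((j : ℝ) + 1) ^ β) = q * q ^ (((j : ℝ) + 1) ^ β - 1) := by
          rw [rpow_sub hq0, rpow_one, mul_div_cancel₀ _ hq0.ne']
      _ ≤ q * q₀ ^ (((j : ℝ) + 1) ^ β - 1) :=
          mul_le_mul_of_nonneg_left (rpow_le_rpow hq0.le hqq₀
            (sub_nonneg.mpr (one_le_rpow hj hβ.le))) hq0.le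
      _ ≤ q * q₀ ^ (((j : ℝ) + 1) ^ B - 1) :=
          mul_le_mul_of_nonneg_left (rpow_le_rpow_of_exponent_ge hq₀0 hq₀1.le
            (sub_le_sub_right (rpow_le_rpow_of_exponent_le hj hBβ) 1)) hq0.le
  have htail : ∑' j : ℕ, q ^ (((j : ℝ) + 1) ^ β) ≤
      q * ∑' j : ℕ, q₀ ^ (((j : ℝ) + 1) ^ B - 1) := by
    rw [← tsum_mul_left]
    exact (summable_rpow_natCast_add_one_rpow hq0 hq1 hβ).tsum_le_tsum hterm
      (hsummable.mul_left q)
  rw [tsum_rpow_abs_intCast_rpow_eq hq0 hq1 hβ]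
  linarith

theorem log_two_mul_le_log_tsum_rpow_abs_intCast_rpow (hq0 : 0 < q) (hq1 : q < 1)
    (hβ : 0 < β) : log 2 * q ≤ log (∑' n : ℤ, q ^ (|(n : ℝ)| ^ β)) :=
  (log_two_mul_le_log_one_add hq0.le hq1.le).trans <|
    log_le_log (by linarith) (one_add_le_tsum_rpow_abs_intCast_rpow hq0 hq1 hβ)

theorem log_tsum_rpow_abs_intCast_rpow_le {q₀ B : ℝ} (hq0 : 0 < q) (hqq₀ : q ≤ q₀)
    (hq₀1 : q₀ < 1) (hB : 0 < B) (hBβ : B ≤ β) :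
    log (∑' n : ℤ, q ^ (|(n : ℝ)| ^ β)) ≤
      2 * (∑' j : ℕ, q₀ ^ (((j : ℝ) + 1) ^ B - 1)) * q := by
  have hpos := tsum_rpow_abs_intCast_rpow_pos hq0 (hqq₀.trans_lt hq₀1) (hB.trans_le hBβ)
  linarith [log_le_sub_one_of_pos hpos, tsum_rpow_abs_intCast_rpow_le hq0 hqq₀ hq₀1 hB hBβ]

end OneDimensional

theorem wfun_rpow_eq_prod {ω : ℝ} (hω : 0 < ω) (a b : ℕ → ℝ) {d : ℕ} (τ : ℝ) (h : Fin d → ℤ) :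
    wfun ω a b d h ^ τ = ∏ k : Fin d, (ω ^ (τ * a k)) ^ (|(h k : ℝ)| ^ b k) := by
  rw [wfun, korSum, ← rpow_mul hω.le, Finset.sum_mul, rpow_sum_of_pos hω]
  exact Finset.prod_congr rfl fun k _ => by rw [← rpow_mul hω.le, mul_comm τ, mul_right_comm]

theorem ineq_2_3_general (ω : ℝ) (hω0 : 0 < ω) (hω1 : ω < 1)
    (a b : ℕ → ℝ) (ha_pos : ∀ k, 0 < a k) (ha_mono : Monotone a)
    (hb_star : 0 < ⨅ k, b k)
    (τ₀ : ℝ) (hτ₀ : 0 < τ₀) (τ : ℝ) (hτ : τ₀ < τ) (d : ℕ) :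
    Summable (fun h : Fin d → ℤ => wfun ω a b d h ^ τ) ∧
    Real.log 2 * ∑ k ∈ Finset.range d, ω ^ (τ * a k) ≤
      Real.log (∑' h : Fin d → ℤ, wfun ω a b d h ^ τ) ∧
    Real.log (∑' h : Fin d → ℤ, wfun ω a b d h ^ τ) ≤
      (2 * ∑' j : ℕ, ω ^ (τ₀ * a 0 * (((j : ℝ) + 1) ^ (⨅ k, b k) - 1))) *
        ∑ k ∈ Finset.range d, ω ^ (τ * a k) := by
  set B := ⨅ k, b k
  -- in `ℝ` an infimum of a family unbounded below is `0`, so `hb_star` bounds `b` below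
  have hB_le (k : ℕ) : B ≤ b k :=
    ciInf_le (not_not.mp fun h => hb_star.ne' (iInf_of_not_bddBelow h)) k
  have hb (k : ℕ) := hb_star.trans_le (hB_le k)
  have hq0 (k : ℕ) : 0 < ω ^ (τ * a k) := rpow_pos_of_pos hω0 _
  have hq_le (k : ℕ) : ω ^ (τ * a k) ≤ ω ^ (τ₀ * a 0) :=
    rpow_le_rpow_of_exponent_ge hω0 hω1.le
      (mul_le_mul hτ.le (ha_mono k.zero_le) (ha_pos 0).le (hτ₀.trans hτ).le)
  have hq₀1 : ω ^ (τ₀ * a 0) < 1 := rpow_lt_one hω0.le hω1 (mul_pos hτ₀ (ha_pos 0))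
  have hq1 (k : ℕ) := (hq_le k).trans_lt hq₀1
  have hasSum : HasSum (fun h : Fin d → ℤ => wfun ω a b d h ^ τ)
      (∏ k : Fin d, ∑' n : ℤ, (ω ^ (τ * a k)) ^ (|(n : ℝ)| ^ b k)) := by
    simp_rw [wfun_rpow_eq_prod hω0]
    exact hasSum_fin_pi_prod (f := fun k (n : ℤ) => (ω ^ (τ * a k)) ^ (|(n : ℝ)| ^ b k))
      (fun k n => (rpow_pos_of_pos (hq0 k) _).le)
      fun k => summable_rpow_abs_intCast_rpow (hq0 k) (hq1 k) (hb k)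
  have hM : ∑' j : ℕ, ω ^ (τ₀ * a 0 * (((j : ℝ) + 1) ^ B - 1)) =
      ∑' j : ℕ, (ω ^ (τ₀ * a 0)) ^ (((j : ℝ) + 1) ^ B - 1) :=
    tsum_congr fun j => rpow_mul hω0.le _ _
  rw [hasSum.tsum_eq, hM, log_prod fun (k : Fin d) _ =>
      (tsum_rpow_abs_intCast_rpow_pos (hq0 k) (hq1 k) (hb k)).ne',
    ← Fin.sum_univ_eq_sum_range, Finset.mul_sum, Finset.mul_sum]
  exact ⟨hasSum.summable,
    Finset.sum_le_sum fun k _ =>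
      log_two_mul_le_log_tsum_rpow_abs_intCast_rpow (hq0 k) (hq1 k) (hb k),
    Finset.sum_le_sum fun k _ =>
      log_tsum_rpow_abs_intCast_rpow_le (hq0 k) (hq_le k) hq₀1 hb_star (hB_le k)⟩

/-- Inequality (2.3): with `M_{τ₀} = 2 ∑_{j=1}^∞ ω^{τ₀ a_1 (j^{b_*}−1)}` and
`b_* = inf_k b_k`, for every `τ > τ₀` and every `d`, the family `(ω_h^τ)` is
summable and `ln 2 · ∑_{k=1}^d ω^{τ a_k} ≤ ln(∑_{h∈ℤ^d} ω_h^τ) ≤ M_{τ₀} · ∑_{k=1}^d ω^{τ a_k}`. -/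
theorem ineq_2_3 (ω : ℝ) (hω0 : 0 < ω) (hω1 : ω < 1)
    (a b : ℕ → ℝ) (ha_pos : ∀ k, 0 < a k) (ha_mono : Monotone a)
    (hb_pos : ∀ k, 0 < b k) (hb_star : 0 < ⨅ k, b k)
    (τ₀ : ℝ) (hτ₀ : 0 < τ₀) (τ : ℝ) (hτ : τ₀ < τ) (d : ℕ) :
    Summable (fun h : Fin d → ℤ => wfun ω a b d h ^ τ) ∧
    Real.log 2 * ∑ k ∈ Finset.range d, ω ^ (τ * a k) ≤
      Real.log (∑' h : Fin d → ℤ, wfun ω a b d h ^ τ) ∧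
    Real.log (∑' h : Fin d → ℤ, wfun ω a b d h ^ τ) ≤
      (2 * ∑' j : ℕ, ω ^ (τ₀ * a 0 * (((j : ℝ) + 1) ^ (⨅ k, b k) - 1))) *
        ∑ k ∈ Finset.range d, ω ^ (τ * a k) :=
  ineq_2_3_general ω hω0 hω1 a b ha_pos ha_mono hb_star τ₀ hτ₀ τ hτ d
end
end

section
/- (Inequality (2.4)): Fix ω ∈ (0,1), a nondecreasing sequence of positive reals a = (a_k)_{k≥1} and positive reals b = (b_k)_{k≥1} with b_* := inf_k b_k > 0, and set M_1 := 2·Σ_{j=1}^∞ ω^{a_1 (j^{b_*}−1)} (finite). Then for every d ∈ ℕ (d ≥ 1): (ω^{a_1} ln 2)/2 ≤ (ln 2 / 2)·Σ_{k=1}^d ω^{a_k} ≤ (1/2)·ln( Σ_{h∈ℤ^d} ω_h ) ≤ (M_1/2)·Σ_{k=1}^d ω^{a_k} ≤ d·M_1·ω^{a_1}/2, where ω_h := ω^{Σ_{k=1}^d a_k|h_k|^{b_k}} and the family (ω_h)_{h∈ℤ^d} is summable. In particular the average-case initial error e^{avg}(0,d) = (Σ_{h∈ℤ^d} ω_h)^{1/2}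 satisfies these two-sided bounds on its logarithm. -/
noncomputable section

/-! The weights factorise over the coordinates, so `∑_h ω_h = ∏_k S_k` with
`S_k = ∑_{x ∈ ℤ} ω^{a_k |x|^{b_k}} = 1 + 2 T_k`, `T_k = ∑_{j ≥ 1} ω^{a_k j^{b_k}}`.
Keeping only the term `j = 1` gives `ω^{a_k} ≤ T_k`; since `a_1 ≤ a_k` and `b_* ≤ b_k`,
`a_k j^{b_k} ≥ a_k + a_1 (j^{b_*} - 1)`, whence `T_k ≤ ω^{a_k} M_1 / 2`.
Bernoulli's inequality `2^t ≤ 1 + t` on `[0, 1]` and `log (1 + y) ≤ y` turn these into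
`(ln 2) ω^{a_k} ≤ ln S_k ≤ M_1 ω^{a_k}`; summing over `k`, and bounding `∑_k ω^{a_k}` between
`ω^{a_1}` and `d ω^{a_1}` by monotonicity of `a`, gives the chain. -/

open Real Filter Topology

theorem mul_log_two_le_log {t s : ℝ} (ht₀ : 0 ≤ t) (ht₁ : t ≤ 1) (hs : 1 + t ≤ s) :
    t * log 2 ≤ log s := by
  have hbernoulli : (2 : ℝ) ^ t ≤ 1 + t := by
    simpa [one_add_one_eq_two] using rpow_one_add_le_one_add_mul_self (s := 1) (by norm_num) ht₀ ht₁
  calc t * log 2 = log (2 ^ t) := (log_rpow two_pos t).symm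
    _ ≤ log s := log_le_log (rpow_pos_of_pos two_pos t) (hbernoulli.trans hs)

theorem hasSum_pi_prod_of_nonneg {β : Type*} :
    ∀ {n : ℕ} {f : Fin n → β → ℝ} {S : Fin n → ℝ}, (∀ i x, 0 ≤ f i x) →
      (∀ i, HasSum (f i) (S i)) → HasSum (fun x : Fin n → β => ∏ i, f i (x i)) (∏ i, S i)
  | 0, f, S, _, _ => by
    simpa only [Fin.prod_univ_zero] using hasSum_unique (fun _ : Fin 0 → β => (1 : ℝ))
  | n + 1, f, S, hf, hS => by
    have htail := hasSum_pi_prod_of_nonneg (fun i x => hf i.succ x) (fun i => hS i.succ)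
    have htail_nonneg : 0 ≤ fun x : Fin n → β => ∏ i, f i.succ (x i) :=
      fun x => Finset.prod_nonneg fun i _ => hf i.succ (x i)
    have hsummable := (hS 0).summable.mul_of_nonneg htail.summable (hf 0) htail_nonneg
    rw [Fin.prod_univ_succ, (hS 0).mul_eq htail hsummable.hasSum,
      ← (Fin.consEquiv fun _ => β).hasSum_iff]
    convert hsummable.hasSum with x
    simp only [Function.comp_apply, Fin.consEquiv_apply, Fin.prod_univ_succ, Fin.cons_zero,
      Fin.cons_succ]

section StretchedExponential

variable {ω : ℝ} (hω0 : 0 < ω) (hω1 : ω < 1)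
include hω0 hω1

theorem summable_rpow_mul_natCast_rpow {c β : ℝ} (hc : 0 < c) (hβ : 0 < β) :
    Summable fun n : ℕ => ω ^ (c * (n : ℝ) ^ β) := by
  set μ := -(c * log ω)
  have hμ : 0 < μ := neg_pos.2 (mul_neg_of_pos_of_neg hc (log_neg hω0 hω1))
  have hdecay : Tendsto (fun x : ℝ => x ^ (2 : ℝ) * ω ^ (c * x ^ β)) atTop (𝓝 0) := by
    refine ((tendsto_rpow_mul_exp_neg_mul_atTop_nhds_zero (2 / β) μ hμ).comp
      (tendsto_rpow_atTop hβ)).congr' ?_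
    filter_upwards [eventually_ge_atTop 0] with x hx
    rw [Function.comp_apply, ← rpow_mul hx, mul_div_cancel₀ _ hβ.ne', rpow_def_of_pos hω0]
    simp only [μ]
    ring_nf
  have hsmall : ∀ᶠ n : ℕ in atTop, ‖ω ^ (c * (n : ℝ) ^ β)‖ ≤ 1 / (n : ℝ) ^ 2 := by
    filter_upwards [(hdecay.comp tendsto_natCast_atTop_atTop).eventually (gt_mem_nhds one_pos),
      eventually_ge_atTop 1] with n hn hn1
    have hn0 : (0 : ℝ) < n := by exact_mod_cast hn1
    rw [norm_of_nonneg (rpow_nonneg hω0.le _), le_div_iff₀ (by positivity), mul_comm]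
    simpa only [Function.comp_apply, rpow_two] using hn.le
  exact Summable.of_norm_bounded_eventually_nat (summable_one_div_nat_pow.2 one_lt_two) hsmall

theorem hasSum_int_rpow_mul_abs_rpow {c β : ℝ} (hc : 0 < c) (hβ : 0 < β) :
    HasSum (fun x : ℤ => ω ^ (c * (|x| : ℝ) ^ β))
      (1 + 2 * ∑' n : ℕ, ω ^ (c * ((n : ℝ) + 1) ^ β)) := by
  set f : ℤ → ℝ := fun x => ω ^ (c * (|x| : ℝ) ^ β)
  have heven : f.Even := fun x => by simp only [f, Int.cast_neg, abs_neg]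
  have hnat : Summable fun n : ℕ => f n := by
    simpa only [f, Int.cast_natCast, Nat.abs_cast] using
      summable_rpow_mul_natCast_rpow hω0 hω1 hc hβ
  have hf : Summable f := hnat.of_nat_of_neg (by simpa only [heven _] using hnat)
  convert hf.hasSum using 1
  rw [tsum_int_eq_zero_add_two_mul_tsum_pnat heven hf, tsum_pnat_eq_tsum_succ (f := fun n => f n)]
  have habs (n : ℕ) : |(n : ℝ) + 1| = n + 1 := abs_of_nonneg (by positivity)
  simp [f, zero_rpow hβ.ne', habs]

theorem summable_rpow_mul_succ_rpow {c β : ℝ} (hc : 0 < c) (hβ : 0 < β) :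
    Summable fun n : ℕ => ω ^ (c * ((n : ℝ) + 1) ^ β) := by
  simpa only [Nat.cast_add, Nat.cast_one] using
    (summable_nat_add_iff 1).2 (summable_rpow_mul_natCast_rpow hω0 hω1 hc hβ)

theorem rpow_le_tsum_rpow_mul_succ_rpow {c β : ℝ} (hc : 0 < c) (hβ : 0 < β) :
    ω ^ c ≤ ∑' n : ℕ, ω ^ (c * ((n : ℝ) + 1) ^ β) := by
  simpa using (summable_rpow_mul_succ_rpow hω0 hω1 hc hβ).le_tsum 0
    (fun n _ => rpow_nonneg hω0.le _)

theorem tsum_rpow_mul_succ_rpow_le {c₀ c β₀ β : ℝ} (hc₀ : 0 < c₀) (hβ₀ : 0 < β₀)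
    (hc : c₀ ≤ c) (hβ : β₀ ≤ β) :
    ∑' n : ℕ, ω ^ (c * ((n : ℝ) + 1) ^ β) ≤
      ω ^ c * ∑' n : ℕ, ω ^ (c₀ * (((n : ℝ) + 1) ^ β₀ - 1)) := by
  have hterm (n : ℕ) : ω ^ (c * ((n : ℝ) + 1) ^ β) ≤
      ω ^ c * ω ^ (c₀ * (((n : ℝ) + 1) ^ β₀ - 1)) := by
    have hn : (1 : ℝ) ≤ n + 1 := le_add_of_nonneg_left n.cast_nonneg
    have hpow₀ : 1 ≤ ((n : ℝ) + 1) ^ β₀ := one_le_rpow hn hβ₀.le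
    have hpow : ((n : ℝ) + 1) ^ β₀ ≤ ((n : ℝ) + 1) ^ β := rpow_le_rpow_of_exponent_le hn hβ
    rw [← rpow_add hω0]
    refine rpow_le_rpow_of_exponent_ge hω0 hω1.le ?_
    nlinarith
  have hsummable : Summable fun n : ℕ => ω ^ (c₀ * (((n : ℝ) + 1) ^ β₀ - 1)) := by
    refine ((summable_rpow_mul_succ_rpow hω0 hω1 hc₀ hβ₀).mul_left (ω ^ (-c₀))).congr fun n => ?_
    rw [← rpow_add hω0]
    ring_nf
  rw [← tsum_mul_left]
  exact (summable_rpow_mul_succ_rpow hω0 hω1 (hc₀.trans_le hc) (hβ₀.trans_le hβ)).tsum_le_tsum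
    hterm (hsummable.mul_left _)

theorem mul_log_two_le_log_one_add_two_mul_tsum {c β : ℝ} (hc : 0 < c) (hβ : 0 < β) :
    ω ^ c * log 2 ≤ log (1 + 2 * ∑' n : ℕ, ω ^ (c * ((n : ℝ) + 1) ^ β)) :=
  mul_log_two_le_log (rpow_nonneg hω0.le c) (rpow_le_one hω0.le hω1.le hc.le)
    (by linarith [rpow_le_tsum_rpow_mul_succ_rpow hω0 hω1 hc hβ, rpow_nonneg hω0.le c])

theorem log_one_add_two_mul_tsum_le {c₀ c β₀ β : ℝ} (hc₀ : 0 < c₀) (hβ₀ : 0 < β₀)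
    (hc : c₀ ≤ c) (hβ : β₀ ≤ β) :
    log (1 + 2 * ∑' n : ℕ, ω ^ (c * ((n : ℝ) + 1) ^ β)) ≤
      2 * (∑' n : ℕ, ω ^ (c₀ * (((n : ℝ) + 1) ^ β₀ - 1))) * ω ^ c := by
  have htail := tsum_rpow_mul_succ_rpow_le hω0 hω1 hc₀ hβ₀ hc hβ
  refine (log_le_sub_one_of_pos (by positivity)).trans ?_
  linarith

end StretchedExponential

theorem hasSum_wfun {ω : ℝ} (hω0 : 0 < ω) (hω1 : ω < 1) {a b : ℕ → ℝ} (ha : ∀ k, 0 < a k)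
    (hb : ∀ k, 0 < b k) (d : ℕ) :
    HasSum (wfun ω a b d) (∏ k : Fin d, (1 + 2 * ∑' n : ℕ, ω ^ (a k * ((n : ℝ) + 1) ^ b k))) := by
  have hprod (h : Fin d → ℤ) : wfun ω a b d h = ∏ k : Fin d, ω ^ (a k * (|h k| : ℝ) ^ b k) :=
    rpow_sum_of_pos hω0 _ _
  rw [funext hprod]
  exact hasSum_pi_prod_of_nonneg (f := fun k (x : ℤ) => ω ^ (a k * (|x| : ℝ) ^ b k))
    (fun _ _ => rpow_nonneg hω0.le _)
    fun k => hasSum_int_rpow_mul_abs_rpow hω0 hω1 (ha k) (hb k)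

theorem log_tsum_wfun {ω : ℝ} (hω0 : 0 < ω) (hω1 : ω < 1) {a b : ℕ → ℝ} (ha : ∀ k, 0 < a k)
    (hb : ∀ k, 0 < b k) (d : ℕ) :
    log (∑' h, wfun ω a b d h) =
      ∑ k ∈ Finset.range d, log (1 + 2 * ∑' n : ℕ, ω ^ (a k * ((n : ℝ) + 1) ^ b k)) := by
  rw [(hasSum_wfun hω0 hω1 ha hb d).tsum_eq, log_prod fun k _ => by positivity]
  exact Fin.sum_univ_eq_sum_range
    (fun k => log (1 + 2 * ∑' n : ℕ, ω ^ (a k * ((n : ℝ) + 1) ^ b k))) d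

/-- Inequality (2.4): with `M₁ = 2 ∑_{j=1}^∞ ω^{a_1 (j^{b_*}−1)}` and `b_* = inf_k b_k`,
for every `d ≥ 1`, the family `(ω_h)_{h∈ℤ^d}` is summable and
`ω^{a_1} ln 2/2 ≤ (ln 2/2) ∑_{k=1}^d ω^{a_k} ≤ (1/2) ln(∑_{h∈ℤ^d} ω_h)
  ≤ (M₁/2) ∑_{k=1}^d ω^{a_k} ≤ d·M₁·ω^{a_1}/2`;
the middle quantity is `ln e^{avg}(0,d)` for the initial average-case error
`e^{avg}(0,d) = (∑_{h∈ℤ^d} ω_h)^{1/2}`. -/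
theorem ineq_2_4 (ω : ℝ) (hω0 : 0 < ω) (hω1 : ω < 1)
    (a b : ℕ → ℝ) (ha_pos : ∀ k, 0 < a k) (ha_mono : Monotone a)
    (hb_pos : ∀ k, 0 < b k) (hb_star : 0 < ⨅ k, b k)
    (d : ℕ) (hd : 1 ≤ d) :
    Summable (fun h : Fin d → ℤ => wfun ω a b d h) ∧
    ω ^ (a 0) * Real.log 2 / 2 ≤ (Real.log 2 / 2) * ∑ k ∈ Finset.range d, ω ^ (a k) ∧
    (Real.log 2 / 2) * ∑ k ∈ Finset.range d, ω ^ (a k) ≤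
      (1 / 2) * Real.log (∑' h : Fin d → ℤ, wfun ω a b d h) ∧
    (1 / 2) * Real.log (∑' h : Fin d → ℤ, wfun ω a b d h) ≤
      ((2 * ∑' j : ℕ, ω ^ (a 0 * (((j : ℝ) + 1) ^ (⨅ k, b k) - 1))) / 2) *
        ∑ k ∈ Finset.range d, ω ^ (a k) ∧
    ((2 * ∑' j : ℕ, ω ^ (a 0 * (((j : ℝ) + 1) ^ (⨅ k, b k) - 1))) / 2) *
        ∑ k ∈ Finset.range d, ω ^ (a k) ≤
      (d : ℝ) * (2 * ∑' j : ℕ, ω ^ (a 0 * (((j : ℝ) + 1) ^ (⨅ k, b k) - 1))) *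
        ω ^ (a 0) / 2 := by
  set β := ⨅ k, b k
  have hβb (k : ℕ) : β ≤ b k := ciInf_le ⟨0, by rintro _ ⟨j, rfl⟩; exact (hb_pos j).le⟩ k
  set M := ∑' j : ℕ, ω ^ (a 0 * (((j : ℝ) + 1) ^ β - 1))
  have hM : 0 ≤ M := tsum_nonneg fun _ => rpow_nonneg hω0.le _
  have hlog := log_tsum_wfun hω0 hω1 ha_pos hb_pos d
  have hlower : log 2 * ∑ k ∈ Finset.range d, ω ^ a k ≤ log (∑' h, wfun ω a b d h) := by
    rw [hlog, Finset.mul_sum]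
    exact Finset.sum_le_sum fun k _ => (mul_comm _ _).trans_le
      (mul_log_two_le_log_one_add_two_mul_tsum hω0 hω1 (ha_pos k) (hb_pos k))
  have hupper : log (∑' h, wfun ω a b d h) ≤ 2 * M * ∑ k ∈ Finset.range d, ω ^ a k := by
    rw [hlog, Finset.mul_sum]
    exact Finset.sum_le_sum fun k _ =>
      log_one_add_two_mul_tsum_le hω0 hω1 (ha_pos 0) hb_star (ha_mono k.zero_le) (hβb k)
  have hfirst : ω ^ a 0 ≤ ∑ k ∈ Finset.range d, ω ^ a k :=
    Finset.single_le_sum (fun k _ => rpow_nonneg hω0.le _) (Finset.mem_range.2 hd)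
  have hlast : ∑ k ∈ Finset.range d, ω ^ a k ≤ d * ω ^ a 0 := by
    simpa using Finset.sum_le_card_nsmul (Finset.range d) (fun k => ω ^ a k) (ω ^ a 0)
      fun k _ => rpow_le_rpow_of_exponent_ge hω0 hω1.le (ha_mono k.zero_le)
  have hlog2 : 0 ≤ log 2 := log_nonneg one_le_two
  refine ⟨(hasSum_wfun hω0 hω1 ha_pos hb_pos d).summable, ?_, ?_, ?_, ?_⟩
  · nlinarith
  · linarith
  · linarith
  · nlinarith
end
end

section
/- Fix ω ∈ (0,1), a nondecreasing sequence of positive reals a = (a_k)_{k≥1} and positive reals b = (b_k)_{k≥1} with b_* := inf_k b_k > 0. For every ε ∈ (0,1), every d ∈ ℕ (d ≥ 1) and every index i with 1 ≤ i ≤ d+1, the counting function satisfies n(ε,d) ≤ #{h ∈ ℤ^{i-1} : Σ_{k=1}^{i-1} |h_k|^{b_*} ≤ ln(ε^{-2})/(a_1 ln(ω^{-1}))} · #{h ∈ ℤ^{d-i+1} : Σ_{k=1}^{d-i+1} |h_k|^{b_*} ≤ ln(ε^{-2})/(a_i ln(ω^{-1}))}, where n(ε,d) := #{h ∈ ℤ^d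 : Σ_{k=1}^d a_k |h_k|^{b_k} < ln(ε^{-2})/ln(ω^{-1})} (all sets involved are finite). -/
noncomputable section

/-- The worst-case information complexity of `L₂`-approximation on the analytic
Korobov space, via its combinatorial formula. -/
def nwor (ω : ℝ) (a b : ℕ → ℝ) (ε : ℝ) (d : ℕ) : ℕ :=
  Set.ncard {h : Fin d → ℤ | korSum a b d h < Real.log (ε⁻¹ ^ 2) / Real.log ω⁻¹}

lemma ncard_prod_eq {α β : Type*} (s : Set α) (t : Set β) :
    (s ×ˢ t).ncard = s.ncard * t.ncard := by
  rw [← Nat.card_coe_set_eq, ← Nat.card_coe_set_eq, ← Nat.card_coe_set_eq,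
    Nat.card_congr (Equiv.Set.prod s t), Nat.card_prod]

/-- Sets of integer vectors with bounded `b_*`-power sums are finite. -/
lemma finite_power_sum_set (n : ℕ) (β C : ℝ) (hβ : 0 < β) :
    {h : Fin n → ℤ | ∑ k, (|h k| : ℝ) ^ β ≤ C}.Finite := by
  set M : ℤ := ⌈(max C 0) ^ (1 / β)⌉ with hM
  have : {h : Fin n → ℤ | ∑ k, (|h k| : ℝ) ^ β ≤ C} ⊆
      Set.pi Set.univ (fun _ : Fin n => Set.Icc (-M) M) := by
    intro h hh
    intro k _
    have hterm : (|h k| : ℝ) ^ β ≤ C := by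
      have hnn : ∀ j ∈ Finset.univ, (0:ℝ) ≤ (|h j| : ℝ) ^ β := fun j _ =>
        Real.rpow_nonneg (by positivity) _
      calc (|h k| : ℝ) ^ β ≤ ∑ j, (|h j| : ℝ) ^ β :=
            Finset.single_le_sum hnn (Finset.mem_univ k)
        _ ≤ C := hh
    have hx : (0:ℝ) ≤ (|h k| : ℝ) := by positivity
    have h1 : ((|h k| : ℝ) ^ β) ^ (1/β) ≤ (max C 0) ^ (1/β) :=
      Real.rpow_le_rpow (Real.rpow_nonneg hx _) (hterm.trans (le_max_left _ _))
        (by positivity)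
    rw [← Real.rpow_mul hx, mul_one_div, div_self hβ.ne', Real.rpow_one] at h1
    have h2 : (|h k| : ℝ) ≤ (M : ℝ) := h1.trans (Int.le_ceil _)
    have h3 : |h k| ≤ M := by exact_mod_cast h2
    exact Set.mem_Icc.2 (abs_le.1 h3)
  exact (Set.Finite.pi (fun _ => Set.finite_Icc _ _)).subset this

/-- Splitting bound: for `1 ≤ i ≤ d+1`,
`n(ε,d) ≤ #{h ∈ ℤ^{i-1} : ∑ |h_k|^{b_*} ≤ ln ε⁻²/(a_1 ln ω⁻¹)} ·
          #{h ∈ ℤ^{d-i+1} : ∑ |h_k|^{b_*} ≤ ln ε⁻²/(a_i ln ω⁻¹)}`,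
with `b_* = inf_k b_k` and 0-indexed sequences (`a_1 = a 0`, `a_i = a (i-1)`). -/
theorem nwor_split_bound (ω : ℝ) (hω0 : 0 < ω) (hω1 : ω < 1)
    (a b : ℕ → ℝ) (ha_pos : ∀ k, 0 < a k) (ha_mono : Monotone a)
    (hb_pos : ∀ k, 0 < b k) (hb_star : 0 < ⨅ k, b k)
    (ε : ℝ) (hε0 : 0 < ε) (hε1 : ε < 1)
    (d : ℕ) (hd : 1 ≤ d) (i : ℕ) (hi1 : 1 ≤ i) (hi2 : i ≤ d + 1) :
    nwor ω a b ε d ≤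
      Set.ncard {h : Fin (i - 1) → ℤ |
          ∑ k, (|h k| : ℝ) ^ (⨅ j, b j) ≤ Real.log (ε⁻¹ ^ 2) / (a 0 * Real.log ω⁻¹)} *
      Set.ncard {h : Fin (d + 1 - i) → ℤ |
          ∑ k, (|h k| : ℝ) ^ (⨅ j, b j) ≤ Real.log (ε⁻¹ ^ 2) / (a (i - 1) * Real.log ω⁻¹)} := by
  obtain ⟨m, rfl⟩ : ∃ m, i = m + 1 := ⟨i - 1, by omega⟩
  have hmd : m ≤ d := by omega
  rw [show m + 1 - 1 = m from rfl, show d + 1 - (m + 1) = d - m from by omega]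
  set β := ⨅ j, b j with hβ
  set L := Real.log (ε⁻¹ ^ 2) / Real.log ω⁻¹ with hLdef
  have hlogω : 0 < Real.log ω⁻¹ := Real.log_pos (by
    rw [lt_inv_comm₀ one_pos hω0]; simpa using hω1)
  have hbdd : BddBelow (Set.range b) := ⟨0, by rintro x ⟨k, rfl⟩; exact (hb_pos k).le⟩
  have hble : ∀ k, β ≤ b k := fun k => ciInf_le hbdd k
  have key : ∀ (k : ℕ) (z : ℤ), (|z| : ℝ) ^ β ≤ (|z| : ℝ) ^ (b k) := by
    intro k z
    rcases eq_or_ne z 0 with rfl | hz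
    · simp [Real.zero_rpow hb_star.ne', Real.zero_rpow (hb_pos k).ne']
    · have h1 : (1 : ℝ) ≤ (|z| : ℝ) := by
        have : (1 : ℤ) ≤ |z| := Int.one_le_abs hz
        exact_mod_cast this
      exact Real.rpow_le_rpow_of_exponent_le h1 (hble k)
  have hsum : ∀ {n : ℕ} (e : Fin n → Fin d), Function.Injective e → ∀ (c : ℝ), 0 < c →
      (∀ k, c ≤ a (e k).1) → ∀ h : Fin d → ℤ, korSum a b d h < L →
      ∑ k, (|h (e k)| : ℝ) ^ β ≤ L / c := by
    intro n e he c hc hce h hh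
    rw [le_div_iff₀ hc, Finset.sum_mul]
    have h1 : ∑ k : Fin n, (|h (e k)| : ℝ) ^ β * c ≤
        ∑ k : Fin n, a (e k).1 * (|h (e k)| : ℝ) ^ (b (e k).1) := by
      refine Finset.sum_le_sum fun k _ => ?_
      rw [mul_comm]
      exact mul_le_mul (hce k) (key _ _) (Real.rpow_nonneg (by positivity) _)
        (ha_pos _).le
    have h2 : ∑ k : Fin n, a (e k).1 * (|h (e k)| : ℝ) ^ (b (e k).1) ≤ korSum a b d h := by
      have := Finset.sum_map Finset.univ ⟨e, he⟩
        (fun j : Fin d => a j.1 * (|h j| : ℝ) ^ (b j.1))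
      simp only [Function.Embedding.coeFn_mk] at this
      rw [← this]
      exact Finset.sum_le_sum_of_subset_of_nonneg (Finset.subset_univ _)
        (fun j _ _ => mul_nonneg (ha_pos _).le (Real.rpow_nonneg (by positivity) _))
    exact (h1.trans (h2.trans hh.le))
  set S := {h : Fin d → ℤ | korSum a b d h < L} with hS
  set S1 := {h : Fin m → ℤ | ∑ k, (|h k| : ℝ) ^ β ≤ Real.log (ε⁻¹ ^ 2) / (a 0 * Real.log ω⁻¹)}
  set S2 := {h : Fin (d - m) → ℤ |
      ∑ k, (|h k| : ℝ) ^ β ≤ Real.log (ε⁻¹ ^ 2) / (a m * Real.log ω⁻¹)}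
  have hdiv : ∀ c : ℝ, Real.log (ε⁻¹ ^ 2) / (c * Real.log ω⁻¹) = L / c := by
    intro c; rw [hLdef, div_div, mul_comm]
  have e2inj : Function.Injective (fun k : Fin (d - m) => (⟨m + k.1, by omega⟩ : Fin d)) := by
    intro k1 k2 hk
    have := Fin.mk.injEq (m + k1.1) _ (m + k2.1) _ ▸ hk
    exact Fin.ext (by omega)
  have hmaps : ∀ h ∈ S, ((fun k => h (Fin.castLE hmd k)),
      (fun k : Fin (d - m) => h ⟨m + k.1, by omega⟩)) ∈ S1 ×ˢ S2 := by
    intro h hh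
    refine ⟨?_, ?_⟩
    · simp only [S1, Set.mem_setOf_eq, hdiv]
      exact hsum (Fin.castLE hmd) (Fin.castLE_injective hmd) (a 0) (ha_pos 0)
        (fun k => ha_mono (Nat.zero_le _)) h hh
    · simp only [S2, Set.mem_setOf_eq, hdiv]
      exact hsum _ e2inj (a m) (ha_pos m)
        (fun k => ha_mono (Nat.le_add_right m k.1)) h hh
  have hinj : Set.InjOn (fun h : Fin d → ℤ => ((fun k => h (Fin.castLE hmd k)),
      (fun k : Fin (d - m) => h ⟨m + k.1, by omega⟩))) S := by
    intro h1 _ h2 _ hfe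
    obtain ⟨he1, he2⟩ := Prod.mk.injEq _ _ _ _ ▸ hfe
    funext j
    by_cases hj : j.1 < m
    · have := congrFun he1 ⟨j.1, hj⟩
      simpa [Fin.castLE, Fin.ext_iff] using this
    · have hj2 : j.1 - m < d - m := by omega
      have := congrFun he2 ⟨j.1 - m, hj2⟩
      simp only at this
      have hjj : (⟨m + (j.1 - m), by omega⟩ : Fin d) = j :=
        Fin.ext (show m + (j.1 - m) = j.1 by omega)
      rwa [hjj] at this
  have hfin : (S1 ×ˢ S2).Finite :=
    (finite_power_sum_set m β _ hb_star).prod (finite_power_sum_set (d - m) β _ hb_star)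
  calc nwor ω a b ε d = S.ncard := rfl
    _ ≤ (S1 ×ˢ S2).ncard := Set.ncard_le_ncard_of_injOn _ hmaps hinj hfin
    _ = S1.ncard * S2.ncard := ncard_prod_eq _ _
end
end
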